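/- arXiv:1908.03539 — 3 statements merged into one kernel-verified Lean document; each statement's English description precedes it below -/
import Mathlib

section
/- For every real p ≥ 2 there exists a constant C_p > 0 such that for all vectors x, h in a real inner product space H, |‖x+h‖^p − ‖x‖^p − p·‖x‖^{p-2}·⟨x,h⟩| ≤ C_p·(‖x‖^{p-2}·‖h‖^2 + ‖h‖^p). -/
/-!
Put `v = ‖x‖ ^ 2`, `w = ‖h‖ ^ 2`, `s = ⟪x, h⟫`, `q = p / 2` and `u = v + 2 s + w = ‖x + h‖ ^ 2`.
The quantity inside the absolute value is the Bregman remainder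
`u ^ q - v ^ q - q v ^ (q - 1) (u - v)` of the convex function `t ↦ t ^ q`, which is nonnegative,
plus `q v ^ (q - 1) w ≥ 0`. If `4 w < v`, then `u ∈ [v / 4, 4 v]` and the remainder is of second
order, `≲ v ^ (q - 2) (u - v) ^ 2 ≲ v ^ (q - 1) w`. Otherwise `u ≤ 9 w` and `|u - v| ≤ 5 w`, and
each term is crudely `≲ w ^ q + v ^ (q - 1) w`.
-/

open Real

namespace Real

theorem rpow_eq_rpow_mul_one_add_div_sub_one {u v : ℝ} (hu : 0 ≤ u) (hv : 0 < v) (q : ℝ) :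
    u ^ q = v ^ q * (1 + (u / v - 1)) ^ q := by
  rw [add_sub_cancel, div_rpow hu hv.le, mul_div_cancel₀ _ (rpow_pos_of_pos hv q).ne']

theorem rpow_add_mul_rpow_sub_one_mul_sub {v : ℝ} (hv : 0 < v) (q u : ℝ) :
    v ^ q + q * v ^ (q - 1) * (u - v) = v ^ q * (1 + q * (u / v - 1)) := by
  rw [rpow_sub_one hv.ne']
  field_simp

theorem rpow_add_mul_rpow_sub_one_mul_sub_le_rpow {q u v : ℝ} (hq : 1 ≤ q) (hu : 0 ≤ u)
    (hv : 0 ≤ v) : v ^ q + q * v ^ (q - 1) * (u - v) ≤ u ^ q := by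
  rcases hv.eq_or_lt with rfl | hv
  · rcases hq.eq_or_lt with rfl | hq
    · simp
    · rw [zero_rpow (by positivity), zero_rpow (sub_ne_zero.mpr hq.ne')]
      simpa using rpow_nonneg hu q
  · rw [rpow_add_mul_rpow_sub_one_mul_sub hv, rpow_eq_rpow_mul_one_add_div_sub_one hu hv q]
    gcongr
    exact one_add_mul_self_le_rpow_one_add (by linarith [div_nonneg hu hv.le]) hq

theorem rpow_le_rpow_add_mul_rpow_sub_one_mul_sub {r u v : ℝ} (hr₀ : 0 ≤ r) (hr₁ : r ≤ 1)
    (hu : 0 ≤ u) (hv : 0 < v) : u ^ r ≤ v ^ r + r * v ^ (r - 1) * (u - v) := by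
  rw [rpow_add_mul_rpow_sub_one_mul_sub hv, rpow_eq_rpow_mul_one_add_div_sub_one hu hv r]
  gcongr
  exact rpow_one_add_le_one_add_mul_self (by linarith [div_nonneg hu hv.le]) hr₀ hr₁

theorem rpow_sub_rpow_le_mul_sub {r u v : ℝ} (hr : 0 ≤ r) (hv : 0 < v) (hvu : v ≤ u) :
    u ^ r - v ^ r ≤ r * (u ^ (r - 1) + v ^ (r - 1)) * (u - v) := by
  have hu : 0 < u := hv.trans_le hvu
  have hu' := mul_nonneg (mul_nonneg hr (rpow_nonneg hu.le (r - 1))) (sub_nonneg.2 hvu)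
  have hv' := mul_nonneg (mul_nonneg hr (rpow_nonneg hv.le (r - 1))) (sub_nonneg.2 hvu)
  rcases le_total r 1 with hr₁ | hr₁
  · nlinarith [rpow_le_rpow_add_mul_rpow_sub_one_mul_sub hr hr₁ hu.le hv]
  · nlinarith [rpow_add_mul_rpow_sub_one_mul_sub_le_rpow hr₁ hv.le hu.le]

theorem rpow_sub_rpow_sub_mul_le_mul_sq {q u v : ℝ} (hq : 1 ≤ q) (hu : 0 < u) (hv : 0 < v) :
    u ^ q - v ^ q - q * v ^ (q - 1) * (u - v) ≤
      q * (q - 1) * (u ^ (q - 2) + v ^ (q - 2)) * (u - v) ^ 2 := by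
  -- the tangent at `u` gives the bound `q (u ^ (q - 1) - v ^ (q - 1)) (u - v)`
  have htangent_u := rpow_add_mul_rpow_sub_one_mul_sub_le_rpow hq hv.le hu.le
  have hexp : q - 1 - 1 = q - 2 := by ring
  have hq₀ : 0 ≤ q - 1 := by linarith
  rcases le_total v u with hvu | huv
  · have h := rpow_sub_rpow_le_mul_sub hq₀ hv hvu
    rw [hexp] at h
    nlinarith [mul_le_mul_of_nonneg_left h (mul_nonneg (by linarith : 0 ≤ q) (sub_nonneg.2 hvu))]
  · have h := rpow_sub_rpow_le_mul_sub hq₀ hu huv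
    rw [hexp] at h
    nlinarith [mul_le_mul_of_nonneg_left h (mul_nonneg (by linarith : 0 ≤ q) (sub_nonneg.2 huv))]

theorem rpow_le_four_rpow_abs_mul_rpow {u v : ℝ} (t : ℝ) (hv : 0 < v) (hvu : v / 4 ≤ u)
    (huv : u ≤ 4 * v) : u ^ t ≤ 4 ^ |t| * v ^ t := by
  rcases le_total 0 t with ht | ht
  · calc u ^ t ≤ (4 * v) ^ t := rpow_le_rpow (by linarith) huv ht
      _ = 4 ^ |t| * v ^ t := by rw [abs_of_nonneg ht, mul_rpow (by norm_num) hv.le]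
  · calc u ^ t ≤ (v / 4) ^ t := rpow_le_rpow_of_nonpos (by positivity) hvu ht
      _ = 4 ^ |t| * v ^ t := by
        rw [abs_of_nonpos ht, div_rpow hv.le (by norm_num), rpow_neg (by norm_num), div_eq_inv_mul]

theorem sq_rpow_div_two {a : ℝ} (ha : 0 ≤ a) (t : ℝ) : (a ^ 2) ^ (t / 2) = a ^ t := by
  rw [← rpow_two, ← rpow_mul ha, mul_div_cancel₀ t two_ne_zero]

end Real

theorem rpow_sub_rpow_sub_mul_le_of_near {q u v : ℝ} (hq : 1 ≤ q) (hv : 0 < v) (hvu : v / 4 ≤ u)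
    (huv : u ≤ 4 * v) :
    u ^ q - v ^ q - q * v ^ (q - 1) * (u - v) ≤
      q * (q - 1) * (4 ^ |q - 2| + 1) * v ^ (q - 2) * (u - v) ^ 2 := by
  have hu : 0 < u := by linarith
  have hsum : u ^ (q - 2) + v ^ (q - 2) ≤ (4 ^ |q - 2| + 1) * v ^ (q - 2) := by
    linarith [rpow_le_four_rpow_abs_mul_rpow (q - 2) hv hvu huv]
  have hqq : 0 ≤ q * (q - 1) := mul_nonneg (by linarith) (by linarith)
  calc _ ≤ q * (q - 1) * (u ^ (q - 2) + v ^ (q - 2)) * (u - v) ^ 2 :=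
        rpow_sub_rpow_sub_mul_le_mul_sq hq hu hv
    _ ≤ _ := by rw [mul_assoc _ _ (v ^ (q - 2))]; gcongr

theorem exists_abs_rpow_add_sub_le {q : ℝ} (hq : 1 ≤ q) :
    ∃ C > 0, ∀ v w s : ℝ, 0 ≤ v → 0 ≤ w → s ^ 2 ≤ v * w →
      |(v + 2 * s + w) ^ q - v ^ q - 2 * q * v ^ (q - 1) * s| ≤
        C * (v ^ (q - 1) * w + w ^ q) := by
  set K := q * (q - 1) * (4 ^ |q - 2| + 1)
  have hK : 0 ≤ K := by
    have : 0 ≤ q - 1 := by linarith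
    positivity
  have h9 : 0 ≤ (9 : ℝ) ^ q := by positivity
  refine ⟨7 * K + 9 ^ q + 6 * q, by positivity, fun v w s hv hw hs => ?_⟩
  set u := v + 2 * s + w with hu_def
  have hu : 0 ≤ u := by nlinarith [sq_nonneg (v - w)]
  have hD := rpow_add_mul_rpow_sub_one_mul_sub_le_rpow hq hu hv
  set X := v ^ (q - 1) * w with hX_def
  have hX : 0 ≤ X := mul_nonneg (rpow_nonneg hv _) hw
  have hwq : 0 ≤ w ^ q := rpow_nonneg hw q
  have hE : u ^ q - v ^ q - 2 * q * v ^ (q - 1) * s =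
      (u ^ q - v ^ q - q * v ^ (q - 1) * (u - v)) + q * X := by ring
  rw [hE, abs_of_nonneg (by nlinarith)]
  rcases lt_or_ge (4 * w) v with hnear | hfar
  · have hv₀ : 0 < v := by linarith
    have hvu : v / 4 ≤ u := by nlinarith
    have huv : u ≤ 4 * v := by nlinarith
    have hsq : (u - v) ^ 2 ≤ 7 * v * w := by
      nlinarith [sq_nonneg (s - 2 * w), mul_le_mul_of_nonneg_left hnear.le hw]
    have hpow : v ^ (q - 2) * v = v ^ (q - 1) := by
      rw [← rpow_add_one hv₀.ne']; ring_nf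
    calc _ ≤ K * v ^ (q - 2) * (u - v) ^ 2 + q * X := by
          gcongr; exact rpow_sub_rpow_sub_mul_le_of_near hq hv₀ hvu huv
      _ ≤ K * v ^ (q - 2) * (7 * v * w) + q * X := by gcongr
      _ = (7 * K + q) * X := by rw [hX_def, ← hpow]; ring
      _ ≤ _ := by nlinarith [mul_nonneg hK hwq, mul_nonneg h9 hX, mul_nonneg h9 hwq]
  · have hu9 : u ≤ 9 * w := by nlinarith
    have habs : |u - v| ≤ 5 * w := by rw [abs_le]; constructor <;> nlinarith
    have hfar_tangent : -(q * v ^ (q - 1) * (u - v)) ≤ 5 * q * X := by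
      have := mul_le_mul_of_nonneg_left ((neg_le_abs (u - v)).trans habs)
        (mul_nonneg (by linarith : 0 ≤ q) (rpow_nonneg hv (q - 1)))
      linarith
    have huq : u ^ q ≤ 9 ^ q * w ^ q := by
      rw [← mul_rpow (by norm_num) hw]; exact rpow_le_rpow hu hu9 (by linarith)
    calc _ ≤ 9 ^ q * w ^ q + 6 * q * X := by linarith [rpow_nonneg hv q]
      _ ≤ _ := by nlinarith [mul_nonneg hK hwq, mul_nonneg hK hX, mul_nonneg h9 hX]

/-- Taylor-type estimate for the p-th power of the norm in a real inner product space. -/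
theorem stmt1 {H : Type*} [NormedAddCommGroup H] [InnerProductSpace ℝ H]
    (p : ℝ) (hp : 2 ≤ p) :
    ∃ C > 0, ∀ x h : H,
      |‖x + h‖ ^ p - ‖x‖ ^ p - p * ‖x‖ ^ (p - 2) * (inner ℝ x h : ℝ)| ≤
        C * (‖x‖ ^ (p - 2) * ‖h‖ ^ (2 : ℝ) + ‖h‖ ^ p) := by
  obtain ⟨C, hC, hbound⟩ := exists_abs_rpow_add_sub_le (q := p / 2) (by linarith)
  refine ⟨C, hC, fun x h => ?_⟩
  have hs : inner ℝ x h ^ 2 ≤ ‖x‖ ^ 2 * ‖h‖ ^ 2 := by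
    rw [← mul_pow, ← sq_abs]
    exact pow_le_pow_left₀ (abs_nonneg _) (abs_real_inner_le_norm x h) 2
  have key := hbound _ _ _ (sq_nonneg ‖x‖) (sq_nonneg ‖h‖) hs
  rw [← norm_add_sq_real, show p / 2 - 1 = (p - 2) / 2 by ring,
    mul_div_cancel₀ p two_ne_zero] at key
  simp only [sq_rpow_div_two (norm_nonneg _)] at key
  rwa [rpow_two]
end

section
/- Higher-order Korn inequality: there exists a constant C > 0 such that for every u ∈ W₀^{2,2}(Λ; ℝᵈ), one has ‖∇e(u)‖_{L²} ≥ C‖u‖_{H^{2,2}}, where e(u)_{ij} = (∂_i u_j + ∂_j u_i)/2 is the symmetric gradient, assuming the classical Korn inequality ∫_Λ |e(v)|² dx ≥ C'‖v‖²_{H^{1,2}} holds for all v ∈ H₀^{1,2}(Λ; ℝᵈ). -/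
open MeasureTheory

/-- Partial derivative in the i-th coordinate direction. -/
noncomputable def pd (d : ℕ) (i : Fin d) (f : EuclideanSpace ℝ (Fin d) → ℝ) :
    EuclideanSpace ℝ (Fin d) → ℝ :=
  fun x => fderiv ℝ f x (EuclideanSpace.single i 1)

/-- The symmetric gradient (rate-of-strain tensor) e_{ij}(v) = (∂_i v_j + ∂_j v_i)/2. -/
noncomputable def eStrain (d : ℕ) (v : EuclideanSpace ℝ (Fin d) → (Fin d → ℝ))
    (i j : Fin d) : EuclideanSpace ℝ (Fin d) → ℝ :=
  fun x => (pd d i (fun y => v y j) x + pd d j (fun y => v y i) x) / 2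


open Function

variable {d : ℕ}

lemma pd_contDiff (i : Fin d) {f : EuclideanSpace ℝ (Fin d) → ℝ} (hf : ContDiff ℝ (⊤ : ℕ∞) f) :
    ContDiff ℝ (⊤ : ℕ∞) (pd d i f) := by
  unfold pd
  exact (ContinuousLinearMap.apply ℝ ℝ (EuclideanSpace.single i 1)).contDiff.comp
    (hf.fderiv_right (m := (⊤ : ℕ∞)) (by simp))

lemma pd_eq_zero (i : Fin d) {f : EuclideanSpace ℝ (Fin d) → ℝ} {x}
    (hx : x ∉ tsupport f) : pd d i f x = 0 := by
  have : fderiv ℝ f x = 0 := by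
    by_contra h
    exact hx (support_fderiv_subset ℝ (f := f) h)
  simp [pd, this]

lemma tsupport_pd_subset (i : Fin d) (f : EuclideanSpace ℝ (Fin d) → ℝ) :
    tsupport (pd d i f) ⊆ tsupport f := by
  apply closure_minimal _ (isClosed_tsupport f)
  intro x hx
  by_contra h
  exact hx (pd_eq_zero i h)

lemma pd_pd (i k : Fin d) {f : EuclideanSpace ℝ (Fin d) → ℝ} (hf : ContDiff ℝ (⊤ : ℕ∞) f) (x) :
    pd d i (pd d k f) x
      = fderiv ℝ (fderiv ℝ f) x (EuclideanSpace.single i 1) (EuclideanSpace.single k 1) := by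
  have hdf : DifferentiableAt ℝ (fderiv ℝ f) x :=
    ((hf.fderiv_right (m := (⊤ : ℕ∞)) (by simp)).differentiable (by simp)).differentiableAt
  rw [show pd d i (pd d k f) x
      = fderiv ℝ (fun y => (fderiv ℝ f y) (EuclideanSpace.single k 1)) x
        (EuclideanSpace.single i 1) from rfl]
  rw [fderiv_clm_apply hdf (differentiableAt_const _)]
  simp

lemma pd_comm (i k : Fin d) {f : EuclideanSpace ℝ (Fin d) → ℝ} (hf : ContDiff ℝ (⊤ : ℕ∞) f) (x) :
    pd d i (pd d k f) x = pd d k (pd d i f) x := by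
  rw [pd_pd i k hf, pd_pd k i hf]
  exact (hf.contDiffAt.isSymmSndFDerivAt (by rw [minSmoothness_of_isRCLikeNormedField]; exact WithTop.coe_le_coe.mpr (le_top : (2 : ℕ∞) ≤ ⊤))) _ _

lemma eStrain_contDiff {u : EuclideanSpace ℝ (Fin d) → (Fin d → ℝ)} (hu : ContDiff ℝ (⊤ : ℕ∞) u)
    (i j : Fin d) : ContDiff ℝ (⊤ : ℕ∞) (eStrain d u i j) := by
  exact ((pd_contDiff i (contDiff_pi.mp hu j)).add
    (pd_contDiff j (contDiff_pi.mp hu i))).div_const 2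

lemma tsupport_apply_subset (u : EuclideanSpace ℝ (Fin d) → (Fin d → ℝ)) (j : Fin d) :
    tsupport (fun y => u y j) ⊆ tsupport u := by
  apply closure_minimal _ (isClosed_tsupport u)
  intro x hx
  by_contra h
  have : u x = 0 := image_eq_zero_of_notMem_tsupport h
  exact hx (by simp [this])

lemma eStrain_eq_zero {u : EuclideanSpace ℝ (Fin d) → (Fin d → ℝ)} {x}
    (hx : x ∉ tsupport u) (i j : Fin d) : eStrain d u i j x = 0 := by
  have h1 : pd d i (fun y => u y j) x = 0 :=
    pd_eq_zero i (fun h => hx (tsupport_apply_subset u j h))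
  have h2 : pd d j (fun y => u y i) x = 0 :=
    pd_eq_zero j (fun h => hx (tsupport_apply_subset u i h))
  simp [eStrain, h1, h2]

lemma pd_eStrain {u : EuclideanSpace ℝ (Fin d) → (Fin d → ℝ)} (hu : ContDiff ℝ (⊤ : ℕ∞) u)
    (k i j : Fin d) (x) :
    pd d k (eStrain d u i j) x
      = (pd d k (pd d i (fun y => u y j)) x + pd d k (pd d j (fun y => u y i)) x) / 2 := by
  have hA : DifferentiableAt ℝ (pd d i (fun y => u y j)) x :=
    ((pd_contDiff i (contDiff_pi.mp hu j)).differentiable (by simp)).differentiableAt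
  have hB : DifferentiableAt ℝ (pd d j (fun y => u y i)) x :=
    ((pd_contDiff j (contDiff_pi.mp hu i)).differentiable (by simp)).differentiableAt
  have heq : eStrain d u i j = fun y =>
      (2⁻¹ : ℝ) • (pd d i (fun z => u z j) y + pd d j (fun z => u z i) y) := by
    funext y
    simp [eStrain, smul_eq_mul]
    ring
  rw [show pd d k (eStrain d u i j) x
      = fderiv ℝ (eStrain d u i j) x (EuclideanSpace.single k 1) from rfl, heq,
    fderiv_fun_const_smul (hA.fun_add hB), fderiv_fun_add hA hB]
  simp [pd, smul_eq_mul]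
  ring

lemma sum_half_sq_le (d : ℕ) (p : Fin d → Fin d → ℝ) :
    ∑ i : Fin d, ∑ j : Fin d, ((p i j + p j i) / 2) ^ 2
      ≤ ∑ i : Fin d, ∑ j : Fin d, (p i j) ^ 2 := by
  have hsw : (∑ i : Fin d, ∑ j : Fin d, (p j i) ^ 2)
      = ∑ i : Fin d, ∑ j : Fin d, (p i j) ^ 2 := Finset.sum_comm
  calc ∑ i : Fin d, ∑ j : Fin d, ((p i j + p j i) / 2) ^ 2
      ≤ ∑ i : Fin d, ∑ j : Fin d, ((p i j) ^ 2 + (p j i) ^ 2) / 2 :=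
        Finset.sum_le_sum fun i _ => Finset.sum_le_sum fun j _ => by
          nlinarith [sq_nonneg (p i j - p j i)]
    _ = ((∑ i : Fin d, ∑ j : Fin d, (p i j) ^ 2)
          + (∑ i : Fin d, ∑ j : Fin d, (p j i) ^ 2)) / 2 := by
        simp only [add_div, Finset.sum_add_distrib, Finset.sum_div]
    _ = ∑ i : Fin d, ∑ j : Fin d, (p i j) ^ 2 := by rw [hsw]; ring

set_option maxHeartbeats 1000000 in
/-- Higher-order Korn inequality: assuming the classical Korn inequality,
    ‖∇e(u)‖_{L²} ≥ C ‖u‖_{H^{2,2}} for u vanishing on the boundary. -/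
theorem stmt6 (d : ℕ) (Λ : Set (EuclideanSpace ℝ (Fin d)))
    (hΛo : IsOpen Λ) (hΛb : Bornology.IsBounded Λ)
    (C' : ℝ) (hC' : 0 < C')
    (hKorn : ∀ v : EuclideanSpace ℝ (Fin d) → (Fin d → ℝ),
      ContDiff ℝ (⊤ : ℕ∞) v → tsupport v ⊆ Λ →
      C' * (∫ x in Λ, ((∑ i : Fin d, (v x i) ^ 2) +
          ∑ i : Fin d, ∑ j : Fin d, (pd d i (fun y => v y j) x) ^ 2)) ≤
        ∫ x in Λ, ∑ i : Fin d, ∑ j : Fin d, (eStrain d v i j x) ^ 2) :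
    ∃ C > 0, ∀ u : EuclideanSpace ℝ (Fin d) → (Fin d → ℝ),
      ContDiff ℝ (⊤ : ℕ∞) u → tsupport u ⊆ Λ →
      C * Real.sqrt (∫ x in Λ, ((∑ i : Fin d, (u x i) ^ 2) +
            (∑ i : Fin d, ∑ j : Fin d, (pd d i (fun y => u y j) x) ^ 2) +
            ∑ k : Fin d, ∑ i : Fin d, ∑ j : Fin d,
              (pd d k (pd d i (fun y => u y j)) x) ^ 2)) ≤
        Real.sqrt (∫ x in Λ, ∑ k : Fin d, ∑ i : Fin d, ∑ j : Fin d,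
          (pd d k (eStrain d u i j) x) ^ 2) := by
  set K : ℝ := C'⁻¹ ^ 2 + C'⁻¹ with hKdef
  have hKpos : 0 < K := by positivity
  refine ⟨(Real.sqrt K)⁻¹, by positivity, ?_⟩
  intro u hu hsupp
  have hcomp : ∀ j : Fin d, ContDiff ℝ (⊤ : ℕ∞) fun y => u y j := fun j => contDiff_pi.mp hu j
  have hcpt : IsCompact (tsupport u) :=
    Metric.isCompact_of_isClosed_isBounded (isClosed_tsupport u) (hΛb.subset hsupp)
  -- integrability machine
  have integ : ∀ g : EuclideanSpace ℝ (Fin d) → ℝ, Continuous g →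
      (∀ x, x ∉ tsupport u → g x = 0) → MeasureTheory.IntegrableOn g Λ MeasureTheory.volume := by
    intro g hg hgz
    have hsub : tsupport g ⊆ tsupport u :=
      closure_minimal (fun x hx => by by_contra h; exact hx (hgz x h)) (isClosed_tsupport u)
    have hcs : HasCompactSupport g := hcpt.of_isClosed_subset (isClosed_tsupport g) hsub
    exact (hg.integrable_of_hasCompactSupport hcs).integrableOn
  -- the five integrands
  set A : EuclideanSpace ℝ (Fin d) → ℝ := fun x => ∑ i : Fin d, (u x i) ^ 2 with hA
  set B : EuclideanSpace ℝ (Fin d) → ℝ :=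
    fun x => ∑ i : Fin d, ∑ j : Fin d, (pd d i (fun y => u y j) x) ^ 2 with hB
  set Cc : EuclideanSpace ℝ (Fin d) → ℝ :=
    fun x => ∑ k : Fin d, ∑ i : Fin d, ∑ j : Fin d,
      (pd d k (pd d i (fun y => u y j)) x) ^ 2 with hCc
  set E1 : EuclideanSpace ℝ (Fin d) → ℝ :=
    fun x => ∑ i : Fin d, ∑ j : Fin d, (eStrain d u i j x) ^ 2 with hE1
  set E2 : EuclideanSpace ℝ (Fin d) → ℝ :=
    fun x => ∑ k : Fin d, ∑ i : Fin d, ∑ j : Fin d,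
      (pd d k (eStrain d u i j) x) ^ 2 with hE2
  have hAint : MeasureTheory.IntegrableOn A Λ MeasureTheory.volume := by
    refine integ A (continuous_finset_sum _ fun i _ => ((hcomp i).continuous).pow 2) fun x hx => ?_
    · exact Finset.sum_eq_zero fun i _ => by
        rw [show u x = 0 from image_eq_zero_of_notMem_tsupport hx]; simp
  have hBint : MeasureTheory.IntegrableOn B Λ MeasureTheory.volume := by
    refine integ B ?_ fun x hx => ?_
    · exact continuous_finset_sum _ fun i _ => continuous_finset_sum _ fun j _ =>
        ((pd_contDiff i (hcomp j)).continuous).pow 2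
    · exact Finset.sum_eq_zero fun i _ => Finset.sum_eq_zero fun j _ => by
        rw [pd_eq_zero i fun h => hx (tsupport_apply_subset u j h)]; simp
  have hCint : MeasureTheory.IntegrableOn Cc Λ MeasureTheory.volume := by
    refine integ Cc ?_ fun x hx => ?_
    · exact continuous_finset_sum _ fun k _ => continuous_finset_sum _ fun i _ =>
        continuous_finset_sum _ fun j _ =>
          ((pd_contDiff k (pd_contDiff i (hcomp j))).continuous).pow 2
    · refine Finset.sum_eq_zero fun k _ => Finset.sum_eq_zero fun i _ =>
        Finset.sum_eq_zero fun j _ => ?_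
      rw [pd_eq_zero k fun h => hx (tsupport_apply_subset u j
        (tsupport_pd_subset i _ h))]; simp
  have hE1int : MeasureTheory.IntegrableOn E1 Λ MeasureTheory.volume := by
    refine integ E1 ?_ fun x hx => ?_
    · exact continuous_finset_sum _ fun i _ => continuous_finset_sum _ fun j _ =>
        ((eStrain_contDiff hu i j).continuous).pow 2
    · exact Finset.sum_eq_zero fun i _ => Finset.sum_eq_zero fun j _ => by
        rw [eStrain_eq_zero hx i j]; simp
  have htsE : ∀ i j : Fin d, tsupport (eStrain d u i j) ⊆ tsupport u := by
    intro i j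
    refine closure_minimal (fun x hx => ?_) (isClosed_tsupport u)
    by_contra h
    exact hx (eStrain_eq_zero h i j)
  have hE2int : MeasureTheory.IntegrableOn E2 Λ MeasureTheory.volume := by
    refine integ E2 ?_ fun x hx => ?_
    · exact continuous_finset_sum _ fun k _ => continuous_finset_sum _ fun i _ =>
        continuous_finset_sum _ fun j _ =>
          ((pd_contDiff k (eStrain_contDiff hu i j)).continuous).pow 2
    · exact Finset.sum_eq_zero fun k _ => Finset.sum_eq_zero fun i _ =>
        Finset.sum_eq_zero fun j _ => by
          rw [pd_eq_zero k fun h => hx (htsE i j h)]; simp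
  -- scalar quantities
  set a : ℝ := ∫ x in Λ, A x with ha'
  set b : ℝ := ∫ x in Λ, B x with hb'
  set c : ℝ := ∫ x in Λ, Cc x with hc'
  set e2 : ℝ := ∫ x in Λ, E2 x with he2'
  have ha0 : 0 ≤ a := MeasureTheory.setIntegral_nonneg hΛo.measurableSet fun x _ =>
    Finset.sum_nonneg fun i _ => sq_nonneg _
  have hb0 : 0 ≤ b := MeasureTheory.setIntegral_nonneg hΛo.measurableSet fun x _ =>
    Finset.sum_nonneg fun i _ => Finset.sum_nonneg fun j _ => sq_nonneg _
  have hc0 : 0 ≤ c := MeasureTheory.setIntegral_nonneg hΛo.measurableSet fun x _ =>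
    Finset.sum_nonneg fun k _ => Finset.sum_nonneg fun i _ =>
      Finset.sum_nonneg fun j _ => sq_nonneg _
  have he20 : 0 ≤ e2 := MeasureTheory.setIntegral_nonneg hΛo.measurableSet fun x _ =>
    Finset.sum_nonneg fun k _ => Finset.sum_nonneg fun i _ =>
      Finset.sum_nonneg fun j _ => sq_nonneg _
  -- Korn applied to u
  have hI : C' * (a + b) ≤ b := by
    have h0 := hKorn u hu hsupp
    have hadd : (∫ x in Λ, (A x + B x)) = a + b := MeasureTheory.integral_add hAint hBint
    have hE1B : (∫ x in Λ, E1 x) ≤ b := by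
      refine MeasureTheory.setIntegral_mono_on hE1int hBint hΛo.measurableSet fun x _ => ?_
      exact sum_half_sq_le d fun i j => pd d i (fun y => u y j) x
    calc C' * (a + b) = C' * ∫ x in Λ, (A x + B x) := by rw [hadd]
      _ ≤ ∫ x in Λ, E1 x := h0
      _ ≤ b := hE1B
  -- Korn applied to the partial derivatives of u
  have hII : C' * (b + c) ≤ e2 := by
    have hk : ∀ k : Fin d,
        C' * ∫ x in Λ, ((∑ j : Fin d, (pd d k (fun y => u y j) x) ^ 2) +
            ∑ i : Fin d, ∑ j : Fin d, (pd d i (pd d k (fun y => u y j)) x) ^ 2) ≤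
          ∫ x in Λ, ∑ i : Fin d, ∑ j : Fin d, (pd d k (eStrain d u i j) x) ^ 2 := by
      intro k
      set v : EuclideanSpace ℝ (Fin d) → (Fin d → ℝ) :=
        fun y j => pd d k (fun z => u z j) y with hv'
      have hv : ContDiff ℝ (⊤ : ℕ∞) v := contDiff_pi.mpr fun j => pd_contDiff k (hcomp j)
      have hvs : tsupport v ⊆ Λ := by
        refine subset_trans (closure_minimal (fun y hy => ?_) (isClosed_tsupport u)) hsupp
        by_contra h
        refine hy ?_
        funext j
        exact pd_eq_zero k fun hh => h (tsupport_apply_subset u j hh)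
      have h0 := hKorn v hv hvs
      have hrhs : (∫ x in Λ, ∑ i : Fin d, ∑ j : Fin d, (eStrain d v i j x) ^ 2)
          = ∫ x in Λ, ∑ i : Fin d, ∑ j : Fin d, (pd d k (eStrain d u i j) x) ^ 2 := by
        refine MeasureTheory.integral_congr_ae (Filter.Eventually.of_forall fun x => ?_)
        refine Finset.sum_congr rfl fun i _ => Finset.sum_congr rfl fun j _ => ?_
        congr 1
        calc eStrain d v i j x
            = (pd d i (pd d k (fun y => u y j)) x + pd d j (pd d k (fun y => u y i)) x) / 2 :=
              rfl
          _ = (pd d k (pd d i (fun y => u y j)) x + pd d k (pd d j (fun y => u y i)) x) / 2 := by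
              rw [pd_comm i k (hcomp j) x, pd_comm j k (hcomp i) x]
          _ = pd d k (eStrain d u i j) x := (pd_eStrain hu k i j x).symm
      rw [hrhs] at h0
      exact h0
    have hint1 : ∀ k : Fin d, MeasureTheory.IntegrableOn
        (fun x => (∑ j : Fin d, (pd d k (fun y => u y j) x) ^ 2) +
          ∑ i : Fin d, ∑ j : Fin d, (pd d i (pd d k (fun y => u y j)) x) ^ 2)
        Λ MeasureTheory.volume := by
      intro k
      refine integ _ ?_ fun x hx => ?_
      · exact (continuous_finset_sum _ fun j _ =>
          ((pd_contDiff k (hcomp j)).continuous).pow 2).add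
          (continuous_finset_sum _ fun i _ => continuous_finset_sum _ fun j _ =>
            ((pd_contDiff i (pd_contDiff k (hcomp j))).continuous).pow 2)
      · have h1 : (∑ j : Fin d, (pd d k (fun y => u y j) x) ^ 2) = 0 :=
          Finset.sum_eq_zero fun j _ => by
            rw [pd_eq_zero k fun h => hx (tsupport_apply_subset u j h)]; simp
        have h2 : (∑ i : Fin d, ∑ j : Fin d, (pd d i (pd d k (fun y => u y j)) x) ^ 2) = 0 :=
          Finset.sum_eq_zero fun i _ => Finset.sum_eq_zero fun j _ => by
            rw [pd_eq_zero i fun h => hx (tsupport_apply_subset u j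
              (tsupport_pd_subset k _ h))]; simp
        rw [h1, h2]; simp
    have hint2 : ∀ k : Fin d, MeasureTheory.IntegrableOn
        (fun x => ∑ i : Fin d, ∑ j : Fin d, (pd d k (eStrain d u i j) x) ^ 2)
        Λ MeasureTheory.volume := by
      intro k
      refine integ _ ?_ fun x hx => ?_
      · exact continuous_finset_sum _ fun i _ => continuous_finset_sum _ fun j _ =>
          ((pd_contDiff k (eStrain_contDiff hu i j)).continuous).pow 2
      · exact Finset.sum_eq_zero fun i _ => Finset.sum_eq_zero fun j _ => by
          rw [pd_eq_zero k fun h => hx (htsE i j h)]; simp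
    have hsumL : (∑ k : Fin d, ∫ x in Λ,
        ((∑ j : Fin d, (pd d k (fun y => u y j) x) ^ 2) +
          ∑ i : Fin d, ∑ j : Fin d, (pd d i (pd d k (fun y => u y j)) x) ^ 2)) = b + c := by
      rw [← MeasureTheory.integral_finset_sum _ fun k _ => hint1 k]
      have hptw : ∀ x : EuclideanSpace ℝ (Fin d),
          (∑ k : Fin d, ((∑ j : Fin d, (pd d k (fun y => u y j) x) ^ 2) +
            ∑ i : Fin d, ∑ j : Fin d, (pd d i (pd d k (fun y => u y j)) x) ^ 2))
          = B x + Cc x := by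
        intro x
        rw [Finset.sum_add_distrib]
        congr 1
        refine Finset.sum_congr rfl fun k _ => Finset.sum_congr rfl fun i _ =>
          Finset.sum_congr rfl fun j _ => ?_
        rw [pd_comm i k (hcomp j) x]
      calc (∫ x in Λ, ∑ k : Fin d, ((∑ j : Fin d, (pd d k (fun y => u y j) x) ^ 2) +
            ∑ i : Fin d, ∑ j : Fin d, (pd d i (pd d k (fun y => u y j)) x) ^ 2))
          = ∫ x in Λ, (B x + Cc x) :=
            MeasureTheory.integral_congr_ae (Filter.Eventually.of_forall hptw)
        _ = b + c := MeasureTheory.integral_add hBint hCint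
    have hsumR : (∑ k : Fin d, ∫ x in Λ,
        ∑ i : Fin d, ∑ j : Fin d, (pd d k (eStrain d u i j) x) ^ 2) = e2 := by
      rw [← MeasureTheory.integral_finset_sum _ fun k _ => hint2 k]
    calc C' * (b + c) = ∑ k : Fin d, C' * ∫ x in Λ,
          ((∑ j : Fin d, (pd d k (fun y => u y j) x) ^ 2) +
            ∑ i : Fin d, ∑ j : Fin d, (pd d i (pd d k (fun y => u y j)) x) ^ 2) := by
          rw [← Finset.mul_sum, hsumL]
      _ ≤ ∑ k : Fin d, ∫ x in Λ,
          ∑ i : Fin d, ∑ j : Fin d, (pd d k (eStrain d u i j) x) ^ 2 :=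
          Finset.sum_le_sum fun k _ => hk k
      _ = e2 := hsumR
  -- arithmetic conclusion
  have hABint : MeasureTheory.IntegrableOn (fun x => A x + B x) Λ MeasureTheory.volume :=
    hAint.add hBint
  have hsplit : (∫ x in Λ, (A x + B x + Cc x)) = a + b + c := by
    rw [show (∫ x in Λ, (A x + B x + Cc x))
        = ∫ x in Λ, ((fun x => A x + B x) x + Cc x) from rfl,
      MeasureTheory.integral_add hABint hCint, MeasureTheory.integral_add hAint hBint]
  have hinv : C'⁻¹ * C' = 1 := inv_mul_cancel₀ hC'.ne'
  have hab : a + b ≤ C'⁻¹ * b := by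
    calc a + b = C'⁻¹ * (C' * (a + b)) := by rw [← mul_assoc, hinv, one_mul]
      _ ≤ C'⁻¹ * b := mul_le_mul_of_nonneg_left hI (by positivity)
  have hbc : b + c ≤ C'⁻¹ * e2 := by
    calc b + c = C'⁻¹ * (C' * (b + c)) := by rw [← mul_assoc, hinv, one_mul]
      _ ≤ C'⁻¹ * e2 := mul_le_mul_of_nonneg_left hII (by positivity)
  have hbb : b ≤ C'⁻¹ * e2 := le_trans (le_add_of_nonneg_right hc0) hbc
  have hkey : a + b + c ≤ K * e2 := by
    calc a + b + c ≤ (a + b) + (b + c) := by linarith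
      _ ≤ C'⁻¹ * (C'⁻¹ * e2) + C'⁻¹ * e2 :=
          add_le_add (hab.trans (mul_le_mul_of_nonneg_left hbb (by positivity))) hbc
      _ = K * e2 := by rw [hKdef]; ring
  show (Real.sqrt K)⁻¹ * Real.sqrt (∫ x in Λ, (A x + B x + Cc x)) ≤ Real.sqrt e2
  rw [hsplit]
  have hs1 : Real.sqrt (a + b + c) ≤ Real.sqrt K * Real.sqrt e2 := by
    rw [← Real.sqrt_mul hKpos.le]
    exact Real.sqrt_le_sqrt hkey
  have hsK : (0:ℝ) < Real.sqrt K := Real.sqrt_pos.mpr hKpos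
  calc (Real.sqrt K)⁻¹ * Real.sqrt (a + b + c)
      ≤ (Real.sqrt K)⁻¹ * (Real.sqrt K * Real.sqrt e2) := by
        exact mul_le_mul_of_nonneg_left hs1 (by positivity)
    _ = Real.sqrt e2 := by
        rw [← mul_assoc, inv_mul_cancel₀ hsK.ne', one_mul]
end

section
/- Suppose z : [s,∞) → ℝ≥0 is absolutely continuous and satisfies z'(t) ≤ c(t)z(t) + f(t) for a.e. t ≥ s, where c, f ∈ L¹_loc. If there exist t̃c > 0 and s₀ ≤ 0 such that ∫_s^0 c(τ)dτ ≤ (t̃c/2)s for all s ≤ s₀ (i.e., the average of c over [s,0] is at most −t̃c/2), then z(0) ≤ z(s)e^{(t̃c/2)s} + ∫_s^{s₀} e^{(t̃c/2)r} f(r)dr + ∫_{s₀}^0 e^{∫_r^0 c(τ)dτ} f(r)dr for all s ≤ s₀. -/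
/-!
With `E t = exp (∫ τ in t..b, c τ)`, the product `z * E` is absolutely continuous and its
derivative `(z' - c z) E` is at most `E f` almost everywhere, so integrating over `[a, b]` gives
the linear Gronwall bound. Absolute continuity of `z` comes from the one-sided bound on `z'`:
`z` differs from a primitive of `max z' (c z + f)` by a monotone function, whose derivative is
integrable.
The absorption estimate is this bound on `[s, 0]`, with the inhomogeneous term split at `s₀` and
`∫ τ in r..0, c τ ≤ (tc / 2) * r` used for `r ≤ s₀`.
-/

open MeasureTheory intervalIntegral Set Filter
open scoped Topology NNReal

theorem AbsolutelyContinuousOnInterval.of_dist_le {X Y : Type*} [PseudoMetricSpace X]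
    [PseudoMetricSpace Y] {f : ℝ → X} {g : ℝ → Y} {a b K : ℝ}
    (hf : AbsolutelyContinuousOnInterval f a b)
    (h : ∀ x ∈ uIcc a b, ∀ y ∈ uIcc a b, dist (g x) (g y) ≤ K * dist (f x) (f y)) :
    AbsolutelyContinuousOnInterval g a b := by
  have hK : Tendsto (fun E : ℕ × (ℕ → ℝ × ℝ) ↦
      K * ∑ i ∈ Finset.range E.1, dist (f (E.2 i).1) (f (E.2 i).2))
      (totalLengthFilter ⊓ 𝓟 (disjWithin a b)) (𝓝 0) := by
    simpa only [mul_zero] using Filter.Tendsto.const_mul K hf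
  refine squeeze_zero' (Eventually.of_forall fun _ ↦ Finset.sum_nonneg fun _ _ ↦ dist_nonneg)
    ?_ hK
  filter_upwards [mem_inf_of_right (mem_principal_self _)] with E hE
  rw [Finset.mul_sum]
  exact Finset.sum_le_sum fun i hi ↦ h _ (hE.1 i hi).1 _ (hE.1 i hi).2

theorem LipschitzOnWith.comp_absolutelyContinuousOnInterval {X Y : Type*} [PseudoMetricSpace X]
    [PseudoMetricSpace Y] {g : X → Y} {f : ℝ → X} {K : ℝ≥0} {s : Set X} {a b : ℝ}
    (hg : LipschitzOnWith K g s) (hf : AbsolutelyContinuousOnInterval f a b)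
    (hfs : MapsTo f (uIcc a b) s) :
    AbsolutelyContinuousOnInterval (g ∘ f) a b :=
  hf.of_dist_le fun _ hx _ hy ↦ hg.dist_le_mul _ (hfs hx) _ (hfs hy)

theorem AbsolutelyContinuousOnInterval.exp {f : ℝ → ℝ} {a b : ℝ}
    (hf : AbsolutelyContinuousOnInterval f a b) :
    AbsolutelyContinuousOnInterval (fun x ↦ Real.exp (f x)) a b := by
  have hcpt : IsCompact (f '' uIcc a b) := isCompact_uIcc.image_of_continuousOn hf.continuousOn
  obtain ⟨K, hK⟩ := (Real.contDiff_exp (n := 1)).locallyLipschitz.locallyLipschitzOn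
    |>.exists_lipschitzOnWith_of_compact hcpt
  exact hK.comp_absolutelyContinuousOnInterval hf (mapsTo_image f _)

theorem intervalIntegrable_of_hasDerivAt_of_ae_le {f f' g : ℝ → ℝ} {a b : ℝ} (hab : a ≤ b)
    (hf : ContinuousOn f (Icc a b)) (hf' : ∀ x ∈ Ioo a b, HasDerivAt f (f' x) x)
    (hg : IntervalIntegrable g volume a b) (hle : ∀ᵐ x, x ∈ Ioo a b → f' x ≤ g x) :
    IntervalIntegrable f' volume a b := by
  have hIoc : volume.restrict (uIoc a b) = volume.restrict (Ioo a b) := by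
    rw [uIoc_of_le hab]; exact Measure.restrict_congr_set Ioo_ae_eq_Ioc.symm
  set φ : ℝ → ℝ := fun x ↦ max (f' x) (g x)
  have hφ : IntervalIntegrable φ volume a b := by
    refine hg.congr_ae ?_
    rw [hIoc]
    filter_upwards [(ae_restrict_iff' measurableSet_Ioo).2 hle] with x hx
    exact (max_eq_right hx).symm
  set H : ℝ → ℝ := fun t ↦ (∫ x in a..t, φ x) - f t
  have hH : MonotoneOn H (uIcc a b) := by
    intro s hs t ht hst
    have hs' : s ∈ Icc a b := uIcc_of_le hab ▸ hs
    have ht' : t ∈ Icc a b := uIcc_of_le hab ▸ ht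
    have hle := sub_le_integral_of_hasDeriv_right_of_le hst
      (hf.mono (Icc_subset_Icc hs'.1 ht'.2))
      (fun x hx ↦ (hf' x ⟨hs'.1.trans_lt hx.1, hx.2.trans_le ht'.2⟩).hasDerivWithinAt)
      ((intervalIntegrable_iff_integrableOn_Icc_of_le hst).1
        (hφ.mono_set (uIcc_subset_uIcc hs ht)))
      (fun x _ ↦ le_max_left _ _)
    have hsplit := integral_interval_sub_left (hφ.mono_set (uIcc_subset_uIcc left_mem_uIcc ht))
      (hφ.mono_set (uIcc_subset_uIcc left_mem_uIcc hs))
    simp only [H]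
    linarith
  refine (hφ.sub hH.intervalIntegrable_deriv).congr_ae ?_
  rw [hIoc]
  filter_upwards [ae_restrict_mem measurableSet_Ioo,
    ae_restrict_of_ae hφ.ae_hasDerivAt_integral] with x hx hderiv
  have hxab : x ∈ uIcc a b := uIcc_of_le hab ▸ Ioo_subset_Icc_self hx
  have hHx : HasDerivAt H (φ x - f' x) x := (hderiv hxab a left_mem_uIcc).sub (hf' x hx)
  rw [hHx.deriv, sub_sub_cancel]

theorem absolutelyContinuousOnInterval_of_hasDerivAt {f f' : ℝ → ℝ} {a b : ℝ} (hab : a ≤ b)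
    (hf : ContinuousOn f (Icc a b)) (hf' : ∀ x ∈ Ioo a b, HasDerivAt f (f' x) x)
    (hint : IntervalIntegrable f' volume a b) :
    AbsolutelyContinuousOnInterval f a b := by
  refine (hint.absolutelyContinuousOnInterval_intervalIntegral left_mem_uIcc).of_dist_le
    (K := 1) fun x hx y hy ↦ le_of_eq ?_
  have hx' : x ∈ Icc a b := uIcc_of_le hab ▸ hx
  have hy' : y ∈ Icc a b := uIcc_of_le hab ▸ hy
  have hFTC : ∫ t in x..y, f' t = f y - f x :=
    integral_eq_sub_of_hasDeriv_right (hf.mono (uIcc_subset_Icc hx' hy'))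
      (fun t ht ↦
        (hf' t (Ioo_subset_Ioo (le_min hx'.1 hy'.1) (max_le hx'.2 hy'.2) ht)).hasDerivWithinAt)
      (hint.mono_set (uIcc_subset_uIcc hx hy))
  rw [one_mul, Real.dist_eq, Real.dist_eq, integral_interval_sub_left
    (hint.mono_set (uIcc_subset_uIcc left_mem_uIcc hx))
    (hint.mono_set (uIcc_subset_uIcc left_mem_uIcc hy)), integral_symm, hFTC, abs_neg,
    abs_sub_comm]

theorem image_le_of_ae_deriv_le_mul_add {z z' c f : ℝ → ℝ} {a b : ℝ} (hab : a ≤ b)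
    (hz : ContinuousOn z (Icc a b)) (hz' : ∀ x ∈ Ioo a b, HasDerivAt z (z' x) x)
    (hc : IntervalIntegrable c volume a b) (hf : IntervalIntegrable f volume a b)
    (hineq : ∀ᵐ x, x ∈ Ioo a b → z' x ≤ c x * z x + f x) :
    z b ≤ z a * Real.exp (∫ τ in a..b, c τ) + ∫ r in a..b, Real.exp (∫ τ in r..b, c τ) * f r := by
  set E : ℝ → ℝ := fun t ↦ Real.exp (∫ τ in t..b, c τ)
  have hE_eq : E = fun t ↦ Real.exp (-∫ τ in b..t, c τ) := by
    funext t; rw [← integral_symm]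
  have hEac : AbsolutelyContinuousOnInterval E a b := by
    rw [hE_eq]
    exact (hc.absolutelyContinuousOnInterval_intervalIntegral right_mem_uIcc).neg.exp
  have hE' : ∀ᵐ x, x ∈ Ioo a b → HasDerivAt E (-c x * E x) x := by
    filter_upwards [hc.ae_hasDerivAt_integral] with x hx hxab
    rw [hE_eq, mul_comm]
    exact ((hx (uIcc_of_le hab ▸ Ioo_subset_Icc_self hxab) b right_mem_uIcc).neg).exp
  have hz'int : IntervalIntegrable z' volume a b :=
    intervalIntegrable_of_hasDerivAt_of_ae_le hab hz hz'
      ((hc.mul_continuousOn (uIcc_of_le hab ▸ hz)).add hf) hineq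
  have hy := (absolutelyContinuousOnInterval_of_hasDerivAt hab hz hz' hz'int).mul hEac
  have hderiv_le : deriv (z * E) ≤ᵐ[volume.restrict (Icc a b)] fun x ↦ E x * f x := by
    rw [Measure.restrict_congr_set Ioo_ae_eq_Icc.symm]
    filter_upwards [ae_restrict_mem measurableSet_Ioo, ae_restrict_of_ae hE',
      ae_restrict_of_ae hineq] with x hx hEx hzx
    have : HasDerivAt (z * E) (z' x * E x + z x * (-c x * E x)) x := (hz' x hx).mul (hEx hx)
    rw [this.deriv]
    have := mul_le_mul_of_nonneg_right (hzx hx) (Real.exp_pos (∫ τ in x..b, c τ)).le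
    linarith
  have hmono := integral_mono_ae_restrict hab hy.intervalIntegrable_deriv
    (hf.continuousOn_mul hEac.continuousOn) hderiv_le
  rw [hy.integral_deriv_eq_sub] at hmono
  simp only [Pi.mul_apply, E, integral_same, Real.exp_zero, mul_one] at hmono
  linarith

theorem MeasureTheory.LocallyIntegrable.intervalIntegrable {E : Type*} [NormedAddCommGroup E]
    {f : ℝ → E} (hf : LocallyIntegrable f) (a b : ℝ) : IntervalIntegrable f volume a b :=
  (hf.integrableOn_isCompact isCompact_uIcc).intervalIntegrable

theorem stmt17_general (z c f : ℝ → ℝ) (tc s₀ : ℝ)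
    (hs₀ : s₀ ≤ 0)
    (hznn : ∀ t, 0 ≤ z t) (hfnn : ∀ t, 0 ≤ f t)
    (hcloc : LocallyIntegrable c) (hfloc : LocallyIntegrable f)
    (hzdiff : Differentiable ℝ z)
    (hineq : ∀ᵐ t ∂volume, deriv z t ≤ c t * z t + f t)
    (hc : ∀ s ≤ s₀, (∫ τ in s..(0:ℝ), c τ) ≤ (tc / 2) * s) :
    ∀ s ≤ s₀,
      z 0 ≤ z s * Real.exp ((tc / 2) * s) +
        (∫ r in s..s₀, Real.exp ((tc / 2) * r) * f r) +
        ∫ r in s₀..(0:ℝ), Real.exp (∫ τ in r..(0:ℝ), c τ) * f r := by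
  intro s hs
  have key := image_le_of_ae_deriv_le_mul_add (hs.trans hs₀) hzdiff.continuous.continuousOn
    (fun x _ ↦ (hzdiff x).hasDerivAt) (hcloc.intervalIntegrable s 0)
    (hfloc.intervalIntegrable s 0) (hineq.mono fun _ ht _ ↦ ht)
  have hcont : Continuous fun r ↦ ∫ τ in r..(0:ℝ), c τ :=
    (continuous_primitive hcloc.intervalIntegrable 0).neg.congr fun r ↦ (integral_symm 0 r).symm
  have hint : ∀ a b,
      IntervalIntegrable (fun r ↦ Real.exp (∫ τ in r..(0:ℝ), c τ) * f r) volume a b :=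
    fun a b ↦ (hfloc.intervalIntegrable a b).continuousOn_mul (by fun_prop)
  rw [← integral_add_adjacent_intervals (hint s s₀) (hint s₀ 0)] at key
  have hfirst : z s * Real.exp (∫ τ in s..(0:ℝ), c τ) ≤ z s * Real.exp ((tc / 2) * s) :=
    mul_le_mul_of_nonneg_left (Real.exp_le_exp.2 (hc s hs)) (hznn s)
  have hsecond : (∫ r in s..s₀, Real.exp (∫ τ in r..(0:ℝ), c τ) * f r)
      ≤ ∫ r in s..s₀, Real.exp ((tc / 2) * r) * f r :=
    integral_mono_on hs (hint s s₀)
      ((hfloc.intervalIntegrable s s₀).continuousOn_mul (by fun_prop))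
      fun r hr ↦ mul_le_mul_of_nonneg_right (Real.exp_le_exp.2 (hc r hr.2)) (hfnn r)
  linarith

/-- Gronwall-type absorption estimate. -/
theorem stmt17 (z c f : ℝ → ℝ) (tc s₀ : ℝ)
    (htc : 0 < tc) (hs₀ : s₀ ≤ 0)
    (hznn : ∀ t, 0 ≤ z t) (hfnn : ∀ t, 0 ≤ f t)
    (hcloc : LocallyIntegrable c) (hfloc : LocallyIntegrable f)
    (hzdiff : Differentiable ℝ z)
    (hineq : ∀ᵐ t ∂volume, deriv z t ≤ c t * z t + f t)
    (hc : ∀ s ≤ s₀, (∫ τ in s..(0:ℝ), c τ) ≤ (tc / 2) * s) :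
    ∀ s ≤ s₀,
      z 0 ≤ z s * Real.exp ((tc / 2) * s) +
        (∫ r in s..s₀, Real.exp ((tc / 2) * r) * f r) +
        ∫ r in s₀..(0:ℝ), Real.exp (∫ τ in r..(0:ℝ), c τ) * f r :=
  stmt17_general z c f tc s₀ hs₀ hznn hfnn hcloc hfloc hzdiff hineq hc
end
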